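/- arXiv:2507.20902 — 5 statements merged into one kernel-verified Lean document; each statement's English description precedes it below -/
import Mathlib

section
/- With C̄ = (-1)^{q(C)} i_C as above, for all C₁, C₂ ∈ V the relation C̄₁₊₂ = (-1)^{Q(C₁,C₂)}((-1)^{q(C₂)} C̄₁ + (-1)^{q(C₁)} C̄₂ - 2 C̄₁ C̄₂) holds in the ring of functions V → ℤ/8, where C̄₁₊₂ denotes the function associated to C₁ + C₂. -/
/-!
Write `a = Q C₁ y`, `b = Q C₂ y`. By bilinearity `Q (C₁ + C₂) y = a + b`, and the indicator of
`a + b = 1` in `ZMod 2` is the XOR `[a] + [b] - 2[a][b]` of the two indicators. The sign is a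
homomorphism `ZMod 2 → ℤ/8ˣ`, so `(-1)^{q (C₁ + C₂)} = (-1)^{q C₁} (-1)^{q C₂} (-1)^{Q C₁ C₂}`.
Multiplying out gives the relation.
-/

lemma ZMod.eq_zero_or_eq_one_of_two (a : ZMod 2) : a = 0 ∨ a = 1 := by
  revert a; decide

lemma ite_add_eq_zero_eq_mul {R : Type*} [Ring R] (s t : ZMod 2) :
    (if s + t = 0 then 1 else -1 : R) =
      (if s = 0 then 1 else -1) * (if t = 0 then 1 else -1) := by
  obtain rfl | rfl := ZMod.eq_zero_or_eq_one_of_two s <;>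
    obtain rfl | rfl := ZMod.eq_zero_or_eq_one_of_two t <;> simp [CharTwo.add_self_eq_zero]

lemma ite_add_eq_one_eq_xor {R : Type*} [Ring R] (a b : ZMod 2) :
    (if a + b = 1 then 1 else 0 : R) =
      (if a = 1 then 1 else 0) + (if b = 1 then 1 else 0)
        - 2 * ((if a = 1 then 1 else 0) * (if b = 1 then 1 else 0)) := by
  obtain rfl | rfl := ZMod.eq_zero_or_eq_one_of_two a <;>
    obtain rfl | rfl := ZMod.eq_zero_or_eq_one_of_two b <;> simp [CharTwo.add_self_eq_zero, one_add_one_eq_two]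

theorem stmt2_general (V : Type*) [AddCommGroup V] [Module (ZMod 2) V]
    (Q : V →ₗ[ZMod 2] V →ₗ[ZMod 2] ZMod 2)
    (i : V → V → ZMod 8)
    (hi : ∀ z y, i z y = if Q z y = 1 then 1 else 0)
    (q : V → ZMod 2)
    (hq : ∀ x y, q (x + y) = q x + q y + Q x y)
    (sgn : ZMod 2 → ZMod 8)
    (hsgn : ∀ t, sgn t = if t = 0 then 1 else -1)
    (cbar : V → V → ZMod 8)
    (hcbar : ∀ C y, cbar C y = sgn (q C) * i C y) :
    ∀ C₁ C₂ y : V, cbar (C₁ + C₂) y =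
      sgn (Q C₁ C₂) * (sgn (q C₂) * cbar C₁ y + sgn (q C₁) * cbar C₂ y
        - 2 * (cbar C₁ y * cbar C₂ y)) := by
  intro C₁ C₂ y
  have sgn_add : ∀ s t, sgn (s + t) = sgn s * sgn t := fun s t => by
    simp only [hsgn, ite_add_eq_zero_eq_mul]
  have i_add : i (C₁ + C₂) y = i C₁ y + i C₂ y - 2 * (i C₁ y * i C₂ y) := by
    simp only [hi, map_add, LinearMap.add_apply, ite_add_eq_one_eq_xor]
  rw [hcbar, hcbar, hcbar, hq, sgn_add, sgn_add, i_add]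
  ring

/-- With `C̄ = (-1)^{q C} • i_C`, for all `C₁ C₂ ∈ V` one has the relation
`(C₁+C₂)‾ = (-1)^{Q C₁ C₂} ((-1)^{q C₂} C̄₁ + (-1)^{q C₁} C̄₂ - 2 C̄₁ C̄₂)` pointwise
in the ring of functions `V → ℤ/8`. -/
theorem stmt2 (V : Type*) [AddCommGroup V] [Module (ZMod 2) V]
    [FiniteDimensional (ZMod 2) V]
    (Q : V →ₗ[ZMod 2] V →ₗ[ZMod 2] ZMod 2)
    (hAlt : ∀ x, Q x x = 0)
    (i : V → V → ZMod 8)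
    (hi : ∀ z y, i z y = if Q z y = 1 then 1 else 0)
    (q : V → ZMod 2)
    (hq : ∀ x y, q (x + y) = q x + q y + Q x y)
    (sgn : ZMod 2 → ZMod 8)
    (hsgn : ∀ t, sgn t = if t = 0 then 1 else -1)
    (cbar : V → V → ZMod 8)
    (hcbar : ∀ C y, cbar C y = sgn (q C) * i C y) :
    ∀ C₁ C₂ y : V, cbar (C₁ + C₂) y =
      sgn (Q C₁ C₂) * (sgn (q C₂) * cbar C₁ y + sgn (q C₁) * cbar C₂ y
        - 2 * (cbar C₁ y * cbar C₂ y)) :=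
  stmt2_general V Q i hi q hq sgn hsgn cbar hcbar
end

section
/- Let {X_i}_{i=1}^{2g} be a symplectic basis of (V, Q) over 𝔽₂ (Q(X_{2i-1},X_{2j}) = δ_{ij}, Q(X_{2i-1},X_{2j-1}) = Q(X_{2i},X_{2j}) = 0). If a ℤ/8-linear combination Σ_i a_i X̄_i + Σ_{i<j} b_{ij} (2 X̄_i X̄_j) + Σ_{i<j<k} c_{ijk} (4 X̄_i X̄_j X̄_k) equals the zero function V → ℤ/8, then a_i = 0, 2 b_{ij} = 0, and 4 c_{ijk} = 0 for all indices. In particular the functions X̄_i, 2X̄_iX̄_j (i<j), 4X̄_iX̄_jX̄_k (i<j<k) span a ℤ/8-submodule of Map(V, ℤ/8) isomorphic to (ℤ/8)^{2g} ⊕ (ℤ/4)^{C(2g,2)} ⊕ (ℤ/2)^{C(2g,3)}. -/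
/-!
The vector `y_S = ∑_{s ∈ S} X (blockPartner s)` pairs nontrivially with `X m` exactly when
`m ∈ S`, so `X̄_m (y_S) = ±1` for `m ∈ S` and `0` otherwise. The given combination is a
square-free cubic polynomial in the values `X̄_m y`, and evaluating it at `y_S` for `|S| = 1, 2, 3`
isolates `a_i`, then `2 b_ij`, then `4 c_ijk`. Hence the kernel of the coefficient map
`(ℤ/8)^{2g + C(2g,2) + C(2g,3)} → Map(V, ℤ/8)` is the kernel of reduction mod `8`, `4`, `2` on the
three blocks of coordinates, and the first isomorphism theorem identifies the span.
-/

open Set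

section
variable {κ M : Type*} [Fintype κ] [AddCommGroup M] {N : ℕ} [Module (ZMod N) M]

noncomputable def spanRangeEquivPiZMod (f : κ → M) (n : κ → ℕ) (hn : ∀ t, n t ∣ N)
    (hker : ∀ c : κ → ZMod N,
      ∑ t, c t • f t = 0 ↔ ∀ t, ZMod.castHom (hn t) (ZMod (n t)) (c t) = 0) :
    Submodule.span (ZMod N) (range f) ≃+ Π t, ZMod (n t) :=
  let combine : (κ → ZMod N) →+ Submodule.span (ZMod N) (range f) :=
    ((Fintype.linearCombination (ZMod N) f).codRestrict _ fun c =>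
      (Submodule.mem_span_range_iff_exists_fun _).2 ⟨c, rfl⟩).toAddMonoidHom
  let reduce : (κ → ZMod N) →+ Π t, ZMod (n t) :=
    AddMonoidHom.pi fun t => (ZMod.castHom (hn t) _).toAddMonoidHom.comp (Pi.evalAddMonoidHom _ t)
  have combine_surj : Function.Surjective combine := by
    rintro ⟨x, hx⟩
    obtain ⟨c, rfl⟩ := (Submodule.mem_span_range_iff_exists_fun _).1 hx
    exact ⟨c, rfl⟩
  have reduce_surj : Function.Surjective reduce := fun x =>
    ⟨fun t => (ZMod.castHom_surjective (hn t) (x t)).choose, funext fun t =>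
      (ZMod.castHom_surjective (hn t) (x t)).choose_spec⟩
  have hker' : combine.ker = reduce.ker := by
    ext c
    rw [AddMonoidHom.mem_ker, AddMonoidHom.mem_ker, ← ZeroMemClass.coe_eq_zero, funext_iff]
    exact hker c
  (QuotientAddGroup.quotientKerEquivOfSurjective combine combine_surj).symm.trans <|
    (QuotientAddGroup.quotientAddEquivOfEq hker').trans <|
      QuotientAddGroup.quotientKerEquivOfSurjective reduce reduce_surj

end

abbrev IncreasingPair (ι : Type*) [LT ι] := {p : ι × ι // p.1 < p.2}
abbrev IncreasingTriple (ι : Type*) [LT ι] := {t : ι × ι × ι // t.1 < t.2.1 ∧ t.2.1 < t.2.2}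

section Ordered
variable {ι : Type*} [LinearOrder ι]

def orderEmbeddingEquivIncreasingTriple : (Fin 3 ↪o ι) ≃ IncreasingTriple ι where
  toFun φ := ⟨(φ 0, φ 1, φ 2), φ.strictMono (by decide), φ.strictMono (by decide)⟩
  invFun t := OrderEmbedding.ofStrictMono ![t.1.1, t.1.2.1, t.1.2.2] <| by
    simp [Fin.strictMono_iff_lt_succ, Fin.forall_fin_two, t.2.1, t.2.2]
  left_inv φ := by ext i; fin_cases i <;> rfl
  right_inv t := rfl

variable [Fintype ι]

lemma sum_sum_ite_lt {R : Type*} [AddCommMonoid R] (F : ι → ι → R) :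
    ∑ i, ∑ j, (if i < j then F i j else 0) = ∑ p : IncreasingPair ι, F p.1.1 p.1.2 := by
  rw [← Fintype.sum_prod_type', ← Finset.sum_filter]
  exact Finset.sum_subtype _ (by simp) _

lemma sum_sum_sum_ite_lt_lt {R : Type*} [AddCommMonoid R] (F : ι → ι → ι → R) :
    ∑ i, ∑ j, ∑ k, (if i < j ∧ j < k then F i j k else 0) =
      ∑ t : IncreasingTriple ι, F t.1.1 t.1.2.1 t.1.2.2 := by
  simp_rw [← Fintype.sum_prod_type']
  rw [← Finset.sum_filter]
  exact Finset.sum_subtype _ (by simp) _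

lemma card_increasingPair : Fintype.card (IncreasingPair ι) = (Fintype.card ι).choose 2 := by
  rw [Fintype.card_subtype]
  exact Fintype.card_product_filter_lt

lemma card_increasingTriple : Fintype.card (IncreasingTriple ι) = (Fintype.card ι).choose 3 := by
  rw [← Nat.card_eq_fintype_card, ← Nat.card_congr orderEmbeddingEquivIncreasingTriple,
    Nat.card_congr Set.powersetCard.ofFinEmbEquiv, Set.powersetCard.card, Nat.card_eq_fintype_card]

variable {R : Type*} [CommRing R]

def multilinearCubic (a : ι → R) (b : IncreasingPair ι → R) (c : IncreasingTriple ι → R)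
    (x : ι → R) : R :=
  ∑ i, a i * x i + ∑ p : IncreasingPair ι, b p * (x p.1.1 * x p.1.2) +
    ∑ t : IncreasingTriple ι, c t * (x t.1.1 * (x t.1.2.1 * x t.1.2.2))

section Support
variable {S : Finset ι} {x : ι → R} (hx : ∀ m ∉ S, x m = 0)
include hx

lemma sum_increasingPair_eq_zero (b : IncreasingPair ι → R)
    (hS : ∀ p : IncreasingPair ι, p.1.1 ∈ S → p.1.2 ∉ S) :
    ∑ p : IncreasingPair ι, b p * (x p.1.1 * x p.1.2) = 0 :=
  Finset.sum_eq_zero fun p _ => by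
    by_cases h : p.1.1 ∈ S
    · simp [hx _ (hS p h)]
    · simp [hx _ h]

lemma sum_increasingPair_eq_single (b : IncreasingPair ι → R) (p₀ : IncreasingPair ι)
    (hS : ∀ p : IncreasingPair ι, p.1.1 ∈ S → p.1.2 ∈ S → p = p₀) :
    ∑ p : IncreasingPair ι, b p * (x p.1.1 * x p.1.2) = b p₀ * (x p₀.1.1 * x p₀.1.2) :=
  Fintype.sum_eq_single p₀ fun p hp => by
    by_cases h₁ : p.1.1 ∈ S
    · by_cases h₂ : p.1.2 ∈ S
      · exact absurd (hS p h₁ h₂) hp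
      · simp [hx _ h₂]
    · simp [hx _ h₁]

lemma sum_increasingTriple_eq_zero (c : IncreasingTriple ι → R)
    (hS : ∀ t : IncreasingTriple ι, t.1.1 ∈ S → t.1.2.1 ∈ S → t.1.2.2 ∉ S) :
    ∑ t : IncreasingTriple ι, c t * (x t.1.1 * (x t.1.2.1 * x t.1.2.2)) = 0 :=
  Finset.sum_eq_zero fun t _ => by
    by_cases h₁ : t.1.1 ∈ S
    · by_cases h₂ : t.1.2.1 ∈ S
      · simp [hx _ (hS t h₁ h₂)]
      · simp [hx _ h₂]
    · simp [hx _ h₁]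

lemma sum_increasingTriple_eq_single (c : IncreasingTriple ι → R) (t₀ : IncreasingTriple ι)
    (hS : ∀ t : IncreasingTriple ι, t.1.1 ∈ S → t.1.2.1 ∈ S → t.1.2.2 ∈ S → t = t₀) :
    ∑ t : IncreasingTriple ι, c t * (x t.1.1 * (x t.1.2.1 * x t.1.2.2)) =
      c t₀ * (x t₀.1.1 * (x t₀.1.2.1 * x t₀.1.2.2)) :=
  Fintype.sum_eq_single t₀ fun t ht => by
    by_cases h₁ : t.1.1 ∈ S
    · by_cases h₂ : t.1.2.1 ∈ S
      · by_cases h₃ : t.1.2.2 ∈ S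
        · exact absurd (hS t h₁ h₂ h₃) ht
        · simp [hx _ h₃]
      · simp [hx _ h₂]
    · simp [hx _ h₁]

end Support

lemma multilinearCubic_indicator_singleton (a : ι → R) (b : IncreasingPair ι → R)
    (c : IncreasingTriple ι → R) (u : ι → R) (i : ι) :
    multilinearCubic a b c (fun m => if m ∈ ({i} : Finset ι) then u m else 0) = a i * u i := by
  have no_pair (p : IncreasingPair ι) : p.1.1 ∈ ({i} : Finset ι) → p.1.2 ∉ ({i} : Finset ι) := by
    obtain ⟨⟨i₁, i₂⟩, h₁₂⟩ := p
    simp only [Finset.mem_singleton]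
    rintro rfl rfl
    order
  have no_triple (t : IncreasingTriple ι) :
      t.1.1 ∈ ({i} : Finset ι) → t.1.2.1 ∈ ({i} : Finset ι) → t.1.2.2 ∉ ({i} : Finset ι) := by
    obtain ⟨⟨i₁, i₂, i₃⟩, h₁₂, h₂₃⟩ := t
    simp only [Finset.mem_singleton]
    rintro rfl rfl
    order
  rw [multilinearCubic, sum_increasingPair_eq_zero (fun m hm => if_neg hm) _ no_pair,
    sum_increasingTriple_eq_zero (fun m hm => if_neg hm) _ no_triple]
  simp

lemma multilinearCubic_zero_indicator_pair (b : IncreasingPair ι → R)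
    (c : IncreasingTriple ι → R) (u : ι → R) {i j : ι} (hij : i < j) :
    multilinearCubic 0 b c (fun m => if m ∈ ({i, j} : Finset ι) then u m else 0) =
      b ⟨(i, j), hij⟩ * (u i * u j) := by
  have unique_pair (p : IncreasingPair ι) :
      p.1.1 ∈ ({i, j} : Finset ι) → p.1.2 ∈ ({i, j} : Finset ι) → p = ⟨(i, j), hij⟩ := by
    obtain ⟨⟨i₁, i₂⟩, h₁₂⟩ := p
    simp only [Finset.mem_insert, Finset.mem_singleton]
    rintro (rfl | rfl) (rfl | rfl) <;> first | rfl | order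
  have no_triple (t : IncreasingTriple ι) : t.1.1 ∈ ({i, j} : Finset ι) →
      t.1.2.1 ∈ ({i, j} : Finset ι) → t.1.2.2 ∉ ({i, j} : Finset ι) := by
    obtain ⟨⟨i₁, i₂, i₃⟩, h₁₂, h₂₃⟩ := t
    simp only [Finset.mem_insert, Finset.mem_singleton, not_or]
    rintro (rfl | rfl) (rfl | rfl) <;> constructor <;> rintro rfl <;> order
  rw [multilinearCubic, sum_increasingPair_eq_single (fun m hm => if_neg hm) _ _ unique_pair,
    sum_increasingTriple_eq_zero (fun m hm => if_neg hm) _ no_triple]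
  simp [hij.ne']

lemma multilinearCubic_zero_zero_indicator_triple (c : IncreasingTriple ι → R) (u : ι → R)
    {i j k : ι} (hij : i < j) (hjk : j < k) :
    multilinearCubic 0 0 c (fun m => if m ∈ ({i, j, k} : Finset ι) then u m else 0) =
      c ⟨(i, j, k), hij, hjk⟩ * (u i * (u j * u k)) := by
  have unique_triple (t : IncreasingTriple ι) : t.1.1 ∈ ({i, j, k} : Finset ι) →
      t.1.2.1 ∈ ({i, j, k} : Finset ι) → t.1.2.2 ∈ ({i, j, k} : Finset ι) →
      t = ⟨(i, j, k), hij, hjk⟩ := by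
    obtain ⟨⟨i₁, i₂, i₃⟩, h₁₂, h₂₃⟩ := t
    simp only [Finset.mem_insert, Finset.mem_singleton]
    rintro (rfl | rfl | rfl) (rfl | rfl | rfl) (rfl | rfl | rfl) <;> first | rfl | order
  rw [multilinearCubic, sum_increasingTriple_eq_single (fun m hm => if_neg hm) _ _ unique_triple]
  simp [hij.ne', hjk.ne', (hij.trans hjk).ne']

theorem multilinearCubic_coeffs_eq_zero {u : ι → R} (hu : ∀ m, IsUnit (u m))
    {a : ι → R} {b : IncreasingPair ι → R} {c : IncreasingTriple ι → R}
    (h : ∀ S : Finset ι, multilinearCubic a b c (fun m => if m ∈ S then u m else 0) = 0) :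
    a = 0 ∧ b = 0 ∧ c = 0 := by
  have ha : a = 0 := funext fun i => (hu i).mul_left_eq_zero.1 <|
    (multilinearCubic_indicator_singleton a b c u i).symm.trans (h {i})
  subst ha
  have hb : b = 0 := funext fun ⟨(i, j), hij⟩ => ((hu i).mul (hu j)).mul_left_eq_zero.1 <|
    (multilinearCubic_zero_indicator_pair b c u hij).symm.trans (h {i, j})
  subst hb
  refine ⟨rfl, rfl, funext fun ⟨(i, j, k), hij, hjk⟩ => ?_⟩
  exact ((hu i).mul ((hu j).mul (hu k))).mul_left_eq_zero.1 <|
    (multilinearCubic_zero_zero_indicator_triple c u hij hjk).symm.trans (h {i, j, k})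

end Ordered

section CubicFamily
variable {ι V : Type*} [LinearOrder ι]

def cubicFamily (e : ι → V → ZMod 8) : ι ⊕ IncreasingPair ι ⊕ IncreasingTriple ι → V → ZMod 8 :=
  Sum.elim e <| Sum.elim (fun p y => 2 * (e p.1.1 y * e p.1.2 y))
    fun t y => 4 * (e t.1.1 y * (e t.1.2.1 y * e t.1.2.2 y))

def cubicOrder : ι ⊕ IncreasingPair ι ⊕ IncreasingTriple ι → ℕ :=
  Sum.elim (fun _ => 8) <| Sum.elim (fun _ => 4) fun _ => 2

def cubicWeight : ι ⊕ IncreasingPair ι ⊕ IncreasingTriple ι → ZMod 8 :=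
  Sum.elim (fun _ => 1) <| Sum.elim (fun _ => 2) fun _ => 4

lemma cubicOrder_dvd (t : ι ⊕ IncreasingPair ι ⊕ IncreasingTriple ι) : cubicOrder t ∣ 8 := by
  rcases t with i | p | t <;> norm_num [cubicOrder]

lemma castHom_cubicOrder_eq_zero_iff (t : ι ⊕ IncreasingPair ι ⊕ IncreasingTriple ι) (c : ZMod 8) :
    ZMod.castHom (cubicOrder_dvd t) (ZMod (cubicOrder t)) c = 0 ↔ c * cubicWeight t = 0 := by
  rcases t with i | p | t
  exacts [(by decide : ∀ c : ZMod 8, ZMod.castHom (dvd_refl 8) (ZMod 8) c = 0 ↔ c * 1 = 0) c,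
    (by decide : ∀ c : ZMod 8, ZMod.castHom (⟨2, rfl⟩ : 4 ∣ 8) (ZMod 4) c = 0 ↔ c * 2 = 0) c,
    (by decide : ∀ c : ZMod 8, ZMod.castHom (⟨4, rfl⟩ : 2 ∣ 8) (ZMod 2) c = 0 ↔ c * 4 = 0) c]

lemma range_cubicFamily (e : ι → V → ZMod 8) :
    range (cubicFamily e) =
      {f | ∃ i, f = fun y => e i y}
        ∪ {f | ∃ i j, i < j ∧ f = fun y => 2 * (e i y * e j y)}
        ∪ {f | ∃ i j k, i < j ∧ j < k ∧ f = fun y => 4 * (e i y * (e j y * e k y))} := by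
  rw [cubicFamily, Sum.elim_range, Sum.elim_range, ← union_assoc]
  congr 2 <;> ext f <;> simp [eq_comm, and_assoc]

variable [Fintype ι]

lemma sum_smul_cubicFamily_eq_zero_iff {e : ι → V → ZMod 8}
    (he : ∀ a b c, (∀ y, multilinearCubic a b c (fun m => e m y) = 0) → a = 0 ∧ b = 0 ∧ c = 0)
    (c : ι ⊕ IncreasingPair ι ⊕ IncreasingTriple ι → ZMod 8) :
    ∑ t, c t • cubicFamily e t = 0 ↔
      ∀ t, ZMod.castHom (cubicOrder_dvd t) (ZMod (cubicOrder t)) (c t) = 0 := by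
  simp only [castHom_cubicOrder_eq_zero_iff, Fintype.sum_sum_type, Sum.forall, cubicFamily,
    cubicWeight, Sum.elim_inl, Sum.elim_inr, mul_one]
  constructor
  · intro h
    obtain ⟨ha, hb, hc⟩ := he (fun i => c (.inl i)) (fun p => c (.inr (.inl p)) * 2)
      (fun t => c (.inr (.inr t)) * 4) fun y => by
        simpa [multilinearCubic, mul_assoc, add_assoc] using congrFun h y
    exact ⟨congrFun ha, congrFun hb, congrFun hc⟩
  · rintro ⟨ha, hb, hc⟩
    funext y
    simp [ha, ← mul_assoc, hb, hc]

noncomputable def spanCubicFamilyEquiv {e : ι → V → ZMod 8}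
    (he : ∀ a b c, (∀ y, multilinearCubic a b c (fun m => e m y) = 0) → a = 0 ∧ b = 0 ∧ c = 0)
    {n : ℕ} (hn : Fintype.card ι = n) :
    Submodule.span (ZMod 8) (range (cubicFamily e)) ≃+
      (ι → ZMod 8) × (Fin (n.choose 2) → ZMod 4) × (Fin (n.choose 3) → ZMod 2) :=
  (spanRangeEquivPiZMod (cubicFamily e) cubicOrder cubicOrder_dvd
    (sum_smul_cubicFamily_eq_zero_iff he)).trans <|
    ((LinearEquiv.sumPiEquivProdPi ℤ _ _ _).trans <|
      (LinearEquiv.refl ℤ (ι → ZMod 8)).prodCongr <|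
        (LinearEquiv.sumPiEquivProdPi ℤ _ _ _).trans <|
          (LinearEquiv.funCongrLeft ℤ (ZMod 4)
            (Fintype.equivFinOfCardEq (hn ▸ card_increasingPair)).symm).prodCongr
          (LinearEquiv.funCongrLeft ℤ (ZMod 2)
            (Fintype.equivFinOfCardEq (hn ▸ card_increasingTriple)).symm)).toAddEquiv

end CubicFamily

def blockPartner {g : ℕ} (s : Fin (2 * g)) : Fin (2 * g) :=
  ⟨if s.val % 2 = 0 then s.val + 1 else s.val - 1, by have := s.isLt; split <;> omega⟩

section Symplectic
variable {g : ℕ} {V : Type*} [AddCommGroup V] [Module (ZMod 2) V]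
  (Q : V →ₗ[ZMod 2] V →ₗ[ZMod 2] ZMod 2) (X : Fin (2 * g) → V)
  (hX : ∀ i j : Fin (2 * g), Q (X i) (X j) = if (i.val / 2 = j.val / 2 ∧ i ≠ j) then 1 else 0)
include hX

lemma apply_blockPartner (m s : Fin (2 * g)) :
    Q (X m) (X (blockPartner s)) = if m = s then 1 else 0 := by
  have hv : (blockPartner s).val = if s.val % 2 = 0 then s.val + 1 else s.val - 1 := rfl
  rw [hX]
  congr 1
  simp only [ne_eq, Fin.ext_iff, eq_iff_iff]
  split at hv <;> omega

lemma apply_sum_blockPartner (m : Fin (2 * g)) (S : Finset (Fin (2 * g))) :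
    Q (X m) (∑ s ∈ S, X (blockPartner s)) = if m ∈ S then 1 else 0 := by
  simp [map_sum, apply_blockPartner Q X hX]

end Symplectic

theorem stmt3_general (g : ℕ) (V : Type*) [AddCommGroup V] [Module (ZMod 2) V]
    (Q : V →ₗ[ZMod 2] V →ₗ[ZMod 2] ZMod 2)
    (X : Module.Basis (Fin (2 * g)) (ZMod 2) V)
    (hX : ∀ i j : Fin (2 * g),
      Q (X i) (X j) = if (i.val / 2 = j.val / 2 ∧ i ≠ j) then 1 else 0)
    (i : V → V → ZMod 8)
    (hi : ∀ z y, i z y = if Q z y = 1 then 1 else 0)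
    (q : V → ZMod 2)
    (sgn : ZMod 2 → ZMod 8)
    (hsgn : ∀ t, sgn t = if t = 0 then 1 else -1)
    (cbar : V → V → ZMod 8)
    (hcbar : ∀ C y, cbar C y = sgn (q C) * i C y) :
    (∀ (a : Fin (2 * g) → ZMod 8) (b : Fin (2 * g) → Fin (2 * g) → ZMod 8)
      (c : Fin (2 * g) → Fin (2 * g) → Fin (2 * g) → ZMod 8),
      (∀ y : V,
        (∑ i', a i' * cbar (X i') y)
        + (∑ i', ∑ j', if i' < j' then
            b i' j' * (2 * (cbar (X i') y * cbar (X j') y)) else 0)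
        + (∑ i', ∑ j', ∑ k', if i' < j' ∧ j' < k' then
            c i' j' k' * (4 * (cbar (X i') y * (cbar (X j') y * cbar (X k') y))) else 0)
        = 0) →
      (∀ i', a i' = 0) ∧ (∀ i' j', i' < j' → 2 * b i' j' = 0) ∧
        (∀ i' j' k', i' < j' → j' < k' → 4 * c i' j' k' = 0)) ∧
    Nonempty
      ((Submodule.span (ZMod 8)
          ({f : V → ZMod 8 | ∃ i', f = fun y => cbar (X i') y}
            ∪ {f | ∃ i' j', i' < j' ∧ f = fun y => 2 * (cbar (X i') y * cbar (X j') y)}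
            ∪ {f | ∃ i' j' k', i' < j' ∧ j' < k' ∧
                f = fun y => 4 * (cbar (X i') y * (cbar (X j') y * cbar (X k') y))})) ≃+
        ((Fin (2 * g) → ZMod 8) × (Fin (Nat.choose (2 * g) 2) → ZMod 4)
          × (Fin (Nat.choose (2 * g) 3) → ZMod 2))) := by
  have hunit (m : Fin (2 * g)) : IsUnit (sgn (q (X m))) := by
    rw [hsgn]
    split_ifs
    exacts [isUnit_one, isUnit_one.neg]
  have hdual (S : Finset (Fin (2 * g))) : (fun m => cbar (X m) (∑ s ∈ S, X (blockPartner s))) =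
      fun m => if m ∈ S then sgn (q (X m)) else 0 := by
    funext m
    by_cases hm : m ∈ S <;> simp [hcbar, hi, apply_sum_blockPartner Q X hX, hm]
  have hcoeffs a b c (h : ∀ y, multilinearCubic a b c (fun m => cbar (X m) y) = 0) :
      a = 0 ∧ b = 0 ∧ c = 0 :=
    multilinearCubic_coeffs_eq_zero hunit fun S => hdual S ▸ h _
  refine ⟨fun a b c H => ?_, ⟨?_⟩⟩
  · obtain ⟨ha, hb, hc⟩ := hcoeffs a (fun p => b p.1.1 p.1.2 * 2)
      (fun t => c t.1.1 t.1.2.1 t.1.2.2 * 4) fun y => by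
        rw [← H y, sum_sum_ite_lt, sum_sum_sum_ite_lt_lt]
        simp only [multilinearCubic, mul_assoc]
    exact ⟨congrFun ha, fun i j hij => (mul_comm _ _).trans (congrFun hb ⟨(i, j), hij⟩),
      fun i j k hij hjk => (mul_comm _ _).trans (congrFun hc ⟨(i, j, k), hij, hjk⟩)⟩
  · rw [← range_cubicFamily fun i y => cbar (X i) y]
    exact spanCubicFamilyEquiv hcoeffs (Fintype.card_fin _)

/-- Let `X : Fin (2g) → V` be a symplectic basis over `𝔽₂` (basis vectors
`X (2i)` and `X (2i+1)` pair to `1`, all other pairings `0`; this is encoded by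
`Q (X i) (X j) = 1` iff `i ≠ j` lie in the same block `{2r, 2r+1}`).  If a `ℤ/8`-linear
combination `Σ aᵢ X̄ᵢ + Σ_{i<j} bᵢⱼ (2 X̄ᵢ X̄ⱼ) + Σ_{i<j<k} cᵢⱼₖ (4 X̄ᵢ X̄ⱼ X̄ₖ)` vanishes
identically, then `aᵢ = 0`, `2 bᵢⱼ = 0` and `4 cᵢⱼₖ = 0`; in particular these functions
span a `ℤ/8`-submodule of `Map(V, ℤ/8)` isomorphic (as an additive group) to
`(ℤ/8)^{2g} ⊕ (ℤ/4)^{C(2g,2)} ⊕ (ℤ/2)^{C(2g,3)}`. -/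
theorem stmt3 (g : ℕ) (V : Type*) [AddCommGroup V] [Module (ZMod 2) V]
    (Q : V →ₗ[ZMod 2] V →ₗ[ZMod 2] ZMod 2)
    (X : Module.Basis (Fin (2 * g)) (ZMod 2) V)
    (hX : ∀ i j : Fin (2 * g),
      Q (X i) (X j) = if (i.val / 2 = j.val / 2 ∧ i ≠ j) then 1 else 0)
    (i : V → V → ZMod 8)
    (hi : ∀ z y, i z y = if Q z y = 1 then 1 else 0)
    (q : V → ZMod 2)
    (hq : ∀ x y, q (x + y) = q x + q y + Q x y)
    (sgn : ZMod 2 → ZMod 8)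
    (hsgn : ∀ t, sgn t = if t = 0 then 1 else -1)
    (cbar : V → V → ZMod 8)
    (hcbar : ∀ C y, cbar C y = sgn (q C) * i C y) :
    (∀ (a : Fin (2 * g) → ZMod 8) (b : Fin (2 * g) → Fin (2 * g) → ZMod 8)
      (c : Fin (2 * g) → Fin (2 * g) → Fin (2 * g) → ZMod 8),
      (∀ y : V,
        (∑ i', a i' * cbar (X i') y)
        + (∑ i', ∑ j', if i' < j' then
            b i' j' * (2 * (cbar (X i') y * cbar (X j') y)) else 0)
        + (∑ i', ∑ j', ∑ k', if i' < j' ∧ j' < k' then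
            c i' j' k' * (4 * (cbar (X i') y * (cbar (X j') y * cbar (X k') y))) else 0)
        = 0) →
      (∀ i', a i' = 0) ∧ (∀ i' j', i' < j' → 2 * b i' j' = 0) ∧
        (∀ i' j' k', i' < j' → j' < k' → 4 * c i' j' k' = 0)) ∧
    Nonempty
      ((Submodule.span (ZMod 8)
          ({f : V → ZMod 8 | ∃ i', f = fun y => cbar (X i') y}
            ∪ {f | ∃ i' j', i' < j' ∧ f = fun y => 2 * (cbar (X i') y * cbar (X j') y)}
            ∪ {f | ∃ i' j' k', i' < j' ∧ j' < k' ∧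
                f = fun y => 4 * (cbar (X i') y * (cbar (X j') y * cbar (X k') y))})) ≃+
        ((Fin (2 * g) → ZMod 8) × (Fin (Nat.choose (2 * g) 2) → ZMod 4)
          × (Fin (Nat.choose (2 * g) 3) → ZMod 2))) :=
  stmt3_general g V Q X hX i hi q sgn hsgn cbar hcbar
end

section
/- Let F be a field of characteristic 2 and V a 2g-dimensional symplectic F-vector space, g ≥ 2. If g is odd then ker(δ₂) ⊆ ⋀²V is an irreducible Sp_{2g}(𝔽₂)-module (where Sp_{2g}(𝔽₂) is embedded via a symplectic basis). If g is even, then the line ⟨ω⟩ is contained in ker(δ₂) and the quotient ker(δ₂)/⟨ω⟩ is an irreducible Sp_{2g}(𝔽₂)-module. -/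
/-!
Only two kinds of elements of `Sp_{2g}(𝔽₂)` are needed: the transvections
`T_v x = x + Q(x, v) v` with `v` a sum of basis vectors, and the permutations of the basis
that respect the hyperbolic pairs `{b (i, false), b (i, true)}`. On `⋀²V` the map `⋀²T_v - 1`
sends `x ∧ y` to `Q(y, v) x ∧ v + Q(x, v) v ∧ y`, so composing two of them with `v = b r`,
`v = b s` projects any `ξ` onto the line of `b r ∧ b s`, with the coefficient of `ξ` at the
dual pair as factor. Hence an invariant `W` containing an element with a nonzero coordinate
at an "off-diagonal" pair (basis vectors from different planes) contains that basis wedge;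
an element of the form `∑ dᵢ eᵢ` (`eᵢ = b (i, false) ∧ b (i, true)`) with `d` not constant is
first moved to one with off-diagonal coordinate `dᵢ - dⱼ` by `T_{b (i, false) + b (j, false)}`.
The permutations carry one off-diagonal wedge to all of them, one more transvection then gives
every `eᵢ - eⱼ`, and since `δ₂ eᵢ = 1` these span `ker δ₂`. So an invariant `W ⊆ ker δ₂` is
`ker δ₂` as soon as it contains an element outside `F ω`; the parity of `g` enters only through
`δ₂ ω = g`.
-/

open ExteriorAlgebra

/-- The wedge `w₁ ∧ ⋯ ∧ wₙ` as an element of the `n`-th exterior power submodule. -/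
noncomputable def expWedge (F : Type*) {V : Type*} [CommRing F] [AddCommGroup V]
    [Module F V] (n : ℕ) (w : Fin n → V) : ⋀[F]^n V :=
  ⟨ExteriorAlgebra.ιMulti F n w, ExteriorAlgebra.ιMulti_range F n ⟨w, rfl⟩⟩

/-- An isometry of `Q` lies in `Sp_{2g}(𝔽₂)` (embedded via the symplectic basis `b`) when it
maps every basis vector to a sum of basis vectors, i.e. it preserves the `𝔽₂`-span of `b`. -/
def IsSpF2 {F V : Type*} [Field F] [AddCommGroup V] [Module F V] {g : ℕ}
    (Q : V →ₗ[F] V →ₗ[F] F) (b : Module.Basis (Fin g × Bool) F V) (A : V ≃ₗ[F] V) : Prop :=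
  (∀ u v, Q (A u) (A v) = Q u v) ∧
    ∀ p : Fin g × Bool, ∃ S : Finset (Fin g × Bool), A (b p) = ∑ q ∈ S, b q

section Wedge

variable (R : Type*) {V : Type*} [CommRing R] [AddCommGroup V] [Module R V]

noncomputable def wedge : V →ₗ[R] V →ₗ[R] ⋀[R]^2 V :=
  LinearMap.mk₂ R (fun u v => exteriorPower.ιMulti R 2 ![u, v])
    (fun _ _ _ => Subtype.ext (by simp [add_mul]))
    (fun _ _ _ => Subtype.ext (by simp))
    (fun _ _ _ => Subtype.ext (by simp [mul_add]))
    (fun _ _ _ => Subtype.ext (by simp))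

variable {R}

lemma wedge_apply (u v : V) : wedge R u v = exteriorPower.ιMulti R 2 ![u, v] := rfl

@[simp] lemma wedge_self (v : V) : wedge R v v = 0 :=
  (exteriorPower.ιMulti R 2).map_eq_zero_of_eq ![v, v] (i := 0) (j := 1) rfl (by decide)

lemma wedge_swap (u v : V) : wedge R v u = -wedge R u v := by
  have := (exteriorPower.ιMulti R 2).map_swap ![u, v] (i := 0) (j := 1) (by decide)
  rwa [show ![u, v] ∘ Equiv.swap 0 1 = ![v, u] by ext i; fin_cases i <;> rfl] at this

lemma wedge_ext {N : Type*} [AddCommGroup N] [Module R N] {f f' : ⋀[R]^2 V →ₗ[R] N}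
    (h : ∀ u v, f (wedge R u v) = f' (wedge R u v)) : f = f' := by
  refine exteriorPower.linearMap_ext (AlternatingMap.ext fun w => ?_)
  rw [LinearMap.compAlternatingMap_apply, LinearMap.compAlternatingMap_apply,
    ← FinVec.etaExpand_eq w]
  exact h (w 0) (w 1)

lemma map_wedge {W : Type*} [AddCommGroup W] [Module R W] (f : V →ₗ[R] W) (u v : V) :
    exteriorPower.map 2 f (wedge R u v) = wedge R (f u) (f v) := by
  rw [wedge_apply, exteriorPower.map_apply_ιMulti, ← FinVec.etaExpand_eq (f ∘ _)]
  rfl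

noncomputable def pairing :
    Module.Dual R V →ₗ[R] Module.Dual R V →ₗ[R] Module.Dual R (⋀[R]^2 V) :=
  (wedge R).compr₂ (exteriorPower.pairingDual R V 2)

lemma pairing_wedge (φ ψ : Module.Dual R V) (u v : V) :
    pairing φ ψ (wedge R u v) = φ u * ψ v - ψ u * φ v := by
  simp [pairing, wedge_apply, Matrix.det_fin_two]

@[simp] lemma pairing_self (φ : Module.Dual R V) : pairing φ φ = 0 := by
  simp [pairing]

lemma pairing_swap (φ ψ : Module.Dual R V) : pairing ψ φ = -pairing φ ψ := by
  simp [pairing, wedge_swap φ ψ]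

lemma span_wedge_basis {ι : Type*} (b : Module.Basis ι R V) :
    Submodule.span R (Set.range fun pq : ι × ι => wedge R (b pq.1) (b pq.2)) = ⊤ := by
  rw [eq_top_iff, ← exteriorPower.ιMulti_span_of_span R 2 V b.span_eq, Submodule.span_le]
  rintro - ⟨w, hw, rfl⟩
  obtain ⟨p, hp⟩ := hw (Set.mem_range_self 0)
  obtain ⟨q, hq⟩ := hw (Set.mem_range_self 1)
  refine Submodule.subset_span ⟨(p, q), ?_⟩
  show exteriorPower.ιMulti R 2 ![b p, b q] = _
  rw [hp, hq]
  exact congrArg _ (FinVec.etaExpand_eq w)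

lemma eq_zero_of_pairing_coord {ι : Type*} (b : Module.Basis ι R V) {ξ : ⋀[R]^2 V}
    (h : ∀ p q, pairing (b.coord p) (b.coord q) ξ = 0) : ξ = 0 := by
  classical
  let : LinearOrder ι := linearOrderOfSTO WellOrderingRel
  refine (b.exteriorPower 2).forall_coord_eq_zero_iff.mp fun s => ?_
  rw [exteriorPower.basis_coord, exteriorPower.ιMultiDual, exteriorPower.ιMulti_family,
    ← FinVec.etaExpand_eq (b.coord ∘ _)]
  exact h _ _

lemma pairing_coord_wedge_basis {ι : Type*} [DecidableEq ι] (b : Module.Basis ι R V)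
    (p q r s : ι) :
    pairing (b.coord p) (b.coord q) (wedge R (b r) (b s)) =
      (if r = p ∧ s = q then 1 else 0) - (if r = q ∧ s = p then 1 else 0) := by
  simp only [pairing_wedge, Module.Basis.coord_apply, Module.Basis.repr_self,
    Finsupp.single_apply, ite_zero_mul_ite_zero, mul_one]

end Wedge

section Transvection

variable {R V : Type*} [CommRing R] [AddCommGroup V] [Module R V]

open LinearMap in
lemma isometry_transvection {Q : V →ₗ[R] V →ₗ[R] R} (hQ : Q.IsAlt) (v x y : V) :
    Q (transvection (Q.flip v) v x) (transvection (Q.flip v) v y) = Q x y := by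
  simp only [transvection.apply, flip_apply, map_add, map_smul, LinearMap.add_apply,
    LinearMap.smul_apply, smul_eq_mul, hQ.self_eq_zero, ← hQ.neg y v]
  ring

noncomputable def wedgeTransvectionSub (f : Module.Dual R V) (v : V) :
    ⋀[R]^2 V →ₗ[R] ⋀[R]^2 V :=
  exteriorPower.map 2 (LinearMap.transvection f v) - LinearMap.id

lemma wedgeTransvectionSub_wedge (f : Module.Dual R V) (v x y : V) :
    wedgeTransvectionSub f v (wedge R x y) = f y • wedge R x v + f x • wedge R v y := by
  simp only [wedgeTransvectionSub, LinearMap.sub_apply, map_wedge, LinearMap.id_apply,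
    LinearMap.transvection.apply, map_add, map_smul, LinearMap.add_apply,
    LinearMap.smul_apply, wedge_self, smul_zero, add_zero]
  abel

lemma wedgeTransvectionSub_comp {f f' : Module.Dual R V} {v : V} (hv : f' v = 0) (w : V) :
    wedgeTransvectionSub f' w ∘ₗ wedgeTransvectionSub f v =
      (pairing f f').smulRight (wedge R v w) := by
  refine wedge_ext fun x y => ?_
  simp only [LinearMap.comp_apply, LinearMap.smulRight_apply, wedgeTransvectionSub_wedge,
    map_add, map_smul, hv, pairing_wedge, wedge_swap w v, zero_smul, add_zero, zero_add]
  module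

lemma pairing_comp_wedgeTransvectionSub (φ ψ f : Module.Dual R V) (v : V) :
    pairing φ ψ ∘ₗ wedgeTransvectionSub f v = ψ v • pairing φ f - φ v • pairing ψ f := by
  refine wedge_ext fun x y => ?_
  simp only [LinearMap.comp_apply, wedgeTransvectionSub_wedge, map_add, map_smul,
    pairing_wedge, LinearMap.sub_apply, LinearMap.smul_apply, smul_eq_mul]
  ring

end Transvection

section SymplecticBasis

variable {g : ℕ}

def mate (p : Fin g × Bool) : Fin g × Bool := (p.1, !p.2)

@[simp] lemma mate_mate (p : Fin g × Bool) : mate (mate p) = p := by simp [mate]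

lemma eq_mate_comm {p q : Fin g × Bool} : p = mate q ↔ q = mate p :=
  ⟨fun h => h ▸ (mate_mate q).symm, fun h => h ▸ (mate_mate p).symm⟩

variable {R V : Type*} [CommRing R] [AddCommGroup V] [Module R V]
  (b : Module.Basis (Fin g × Bool) R V)

noncomputable def diagWedge (i : Fin g) : ⋀[R]^2 V := wedge R (b (i, false)) (b (i, true))

noncomputable def omega : ⋀[R]^2 V := ∑ i, diagWedge b i

lemma eq_sum_diagWedge {ξ : ⋀[R]^2 V}
    (h : ∀ p q, p.1 ≠ q.1 → pairing (b.coord p) (b.coord q) ξ = 0) :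
    ξ = ∑ i, pairing (b.coord (i, false)) (b.coord (i, true)) ξ • diagWedge b i := by
  refine sub_eq_zero.mp (eq_zero_of_pairing_coord b fun p q => ?_)
  rcases p with ⟨i, s⟩
  rcases q with ⟨j, t⟩
  simp only [map_sub, map_sum, map_smul, diagWedge, pairing_coord_wedge_basis, smul_eq_mul]
  by_cases hij : i = j
  · subst hij
    cases s <;> cases t <;> simp [pairing_swap (b.coord (i, false)) (b.coord (i, true))]
  · rw [h _ _ hij, zero_sub, neg_eq_zero]
    refine Finset.sum_eq_zero fun k _ => ?_
    simp only [Prod.mk.injEq]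
    rw [if_neg (by rintro ⟨⟨rfl, -⟩, rfl, -⟩; exact hij rfl),
      if_neg (by rintro ⟨⟨rfl, -⟩, rfl, -⟩; exact hij rfl), sub_zero, mul_zero]

lemma exists_perm_mate_comm {a c p q : Fin g × Bool} (hac : a.1 ≠ c.1) (hpq : p.1 ≠ q.1) :
    ∃ π : Equiv.Perm (Fin g × Bool), (∀ x, π (mate x) = mate (π x)) ∧ π a = p ∧ π c = q := by
  set σ : Equiv.Perm (Fin g) := Equiv.swap (Equiv.swap a.1 p.1 c.1) q.1 * Equiv.swap a.1 p.1
  have hσa : σ a.1 = p.1 := by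
    have : Equiv.swap a.1 p.1 c.1 ≠ p.1 := fun h =>
      hac ((Equiv.swap a.1 p.1).injective (h.trans (Equiv.swap_apply_left a.1 p.1).symm)).symm
    simp [σ, Equiv.swap_apply_of_ne_of_ne this.symm hpq]
  have hσc : σ c.1 = q.1 := by simp [σ]
  let flip : Fin g → Bool := fun i => if i = a.1 then xor a.2 p.2 else xor c.2 q.2
  refine ⟨Equiv.prodShear σ fun i => if flip i then Equiv.boolNot else Equiv.refl Bool,
    fun x => ?_, ?_, ?_⟩
  · by_cases h : flip x.1 <;> simp [mate, h]
  · obtain ⟨a1, a2⟩ := a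
    obtain ⟨p1, p2⟩ := p
    cases a2 <;> cases p2 <;> simp_all [flip]
  · obtain ⟨c1, c2⟩ := c
    obtain ⟨q1, q2⟩ := q
    cases c2 <;> cases q2 <;> simp_all [flip, Ne.symm hac]

/-- The transvection field is `x ↦ x + Q(x, v) v` for `v = ∑ q ∈ S, b q`, written through
`Q(x, b q) = b.coord (mate q) x` so that no form is needed. -/
structure IsSymplecticStable (W : Submodule R (⋀[R]^2 V)) : Prop where
  map_transvection_mem (S : Finset (Fin g × Bool)) {ξ : ⋀[R]^2 V} (hξ : ξ ∈ W) :
    exteriorPower.map 2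
      (LinearMap.transvection (∑ q ∈ S, b.coord (mate q)) (∑ q ∈ S, b q)) ξ ∈ W
  map_perm_mem (π : Equiv.Perm (Fin g × Bool)) (hπ : ∀ p, π (mate p) = mate (π p))
    {ξ : ⋀[R]^2 V} (hξ : ξ ∈ W) : exteriorPower.map 2 (b.equiv b π : V →ₗ[R] V) ξ ∈ W

end SymplecticBasis

section Field

variable {g : ℕ} {F V : Type*} [Field F] [AddCommGroup V] [Module F V]
  {b : Module.Basis (Fin g × Bool) F V} {W : Submodule F (⋀[F]^2 V)}

lemma IsSymplecticStable.wedgeTransvectionSub_mem (hW : IsSymplecticStable b W)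
    (S : Finset (Fin g × Bool)) {ξ : ⋀[F]^2 V} (hξ : ξ ∈ W) :
    wedgeTransvectionSub (∑ q ∈ S, b.coord (mate q)) (∑ q ∈ S, b q) ξ ∈ W :=
  W.sub_mem (hW.map_transvection_mem S hξ) hξ

lemma IsSymplecticStable.wedge_mem_of_pairing_ne_zero (hW : IsSymplecticStable b W)
    {ξ : ⋀[F]^2 V} (hξ : ξ ∈ W) {r s : Fin g × Bool} (hrs : r.1 ≠ s.1)
    (h : pairing (b.coord (mate r)) (b.coord (mate s)) ξ ≠ 0) : wedge F (b r) (b s) ∈ W := by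
  have hsr : b.coord (mate s) (b r) = 0 := by
    simp [mate, Prod.ext_iff, hrs]
  have hD := hW.wedgeTransvectionSub_mem {s} (hW.wedgeTransvectionSub_mem {r} hξ)
  simp only [Finset.sum_singleton] at hD
  rwa [← LinearMap.comp_apply, wedgeTransvectionSub_comp hsr, LinearMap.smulRight_apply,
    W.smul_mem_iff h] at hD

lemma IsSymplecticStable.offDiag_wedge_mem (hW : IsSymplecticStable b W) {a c : Fin g × Bool}
    (hac : a.1 ≠ c.1) (hmem : wedge F (b a) (b c) ∈ W) {p q : Fin g × Bool} (hpq : p.1 ≠ q.1) :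
    wedge F (b p) (b q) ∈ W := by
  obtain ⟨π, hπ, rfl, rfl⟩ := exists_perm_mate_comm hac hpq
  simpa [map_wedge] using hW.map_perm_mem π hπ hmem

lemma IsSymplecticStable.diagWedge_sub_mem (hW : IsSymplecticStable b W)
    (hoff : ∀ p q : Fin g × Bool, p.1 ≠ q.1 → wedge F (b p) (b q) ∈ W) (i j : Fin g) :
    diagWedge b i - diagWedge b j ∈ W := by
  rcases eq_or_ne i j with rfl | hij
  · rw [sub_self]; exact W.zero_mem
  have hD := hW.wedgeTransvectionSub_mem {(i, true), (j, true)}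
    (hoff (i, false) (j, false) hij)
  have hpair : ((i, true) : Fin g × Bool) ≠ (j, true) := by simp [hij]
  simp only [Finset.sum_pair hpair, wedgeTransvectionSub_wedge] at hD
  simp only [mate, Bool.not_true, LinearMap.add_apply, Module.Basis.coord_apply,
    Module.Basis.repr_self, ne_eq, Prod.mk.injEq, hij, Ne.symm hij, and_true, not_false_eq_true,
    Finsupp.single_eq_of_ne, Finsupp.single_eq_same, zero_add, add_zero, map_add, smul_add,
    one_smul] at hD
  convert W.sub_mem (W.sub_mem hD (hoff (i, false) (j, true) hij))
    (hoff (i, true) (j, false) hij) using 1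
  rw [diagWedge, diagWedge, wedge_swap (b (j, false)) (b (j, true))]
  abel

lemma IsSymplecticStable.exists_offDiag_wedge_mem (hW : IsSymplecticStable b W)
    {ξ : ⋀[F]^2 V} (hξ : ξ ∈ W) (hne : ∀ c : F, ξ ≠ c • omega b) :
    ∃ p q : Fin g × Bool, p.1 ≠ q.1 ∧ wedge F (b p) (b q) ∈ W := by
  by_cases hoff : ∃ p q : Fin g × Bool, p.1 ≠ q.1 ∧ pairing (b.coord p) (b.coord q) ξ ≠ 0
  · obtain ⟨p, q, hpq, h⟩ := hoff
    exact ⟨mate p, mate q, hpq, hW.wedge_mem_of_pairing_ne_zero hξ hpq (by simpa using h)⟩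
  push Not at hoff
  set d : Fin g → F := fun i => pairing (b.coord (i, false)) (b.coord (i, true)) ξ
  have hξd : ξ = ∑ i, d i • diagWedge b i := eq_sum_diagWedge b hoff
  obtain ⟨i, j, hd⟩ : ∃ i j, d i ≠ d j := by
    by_contra! hconst
    rcases isEmpty_or_nonempty (Fin g) with hg | ⟨⟨i₀⟩⟩
    · exact hne 0 (by simp [hξd, Finset.univ_eq_empty])
    · exact hne (d i₀) (by simp only [hξd, omega, Finset.smul_sum, hconst _ i₀])
  have hij : i ≠ j := fun h => hd (h ▸ rfl)
  have hpair : ((i, false) : Fin g × Bool) ≠ (j, false) := by simp [hij]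
  refine ⟨(i, true), (j, true), hij, hW.wedge_mem_of_pairing_ne_zero
    (hW.wedgeTransvectionSub_mem {(i, false), (j, false)} hξ) hij ?_⟩
  rw [← LinearMap.comp_apply, Finset.sum_pair hpair, Finset.sum_pair hpair,
    pairing_comp_wedgeTransvectionSub]
  simpa [mate, hij, Ne.symm hij, hoff (i, false) (j, true) hij,
    hoff (j, false) (i, true) (Ne.symm hij)] using sub_ne_zero.mpr hd

lemma ker_le_of_offDiag_wedge_mem {δ : ⋀[F]^2 V →ₗ[F] F} (hWδ : W ≤ LinearMap.ker δ)
    (hoff : ∀ p q : Fin g × Bool, p.1 ≠ q.1 → wedge F (b p) (b q) ∈ W)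
    (hdiag : ∀ i j, diagWedge b i - diagWedge b j ∈ W) {i₀ : Fin g}
    (hi₀ : δ (diagWedge b i₀) ≠ 0) :
    LinearMap.ker δ ≤ W := by
  have hgen : ⊤ ≤ W ⊔ F ∙ diagWedge b i₀ := by
    rw [← span_wedge_basis b, Submodule.span_le]
    rintro - ⟨⟨⟨i, s⟩, ⟨j, t⟩⟩, rfl⟩
    by_cases hij : i = j
    · subst hij
      have hi : diagWedge b i ∈ W ⊔ F ∙ diagWedge b i₀ := by
        simpa using Submodule.add_mem_sup (hdiag i i₀)
          (Submodule.mem_span_singleton_self (diagWedge b i₀))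
      cases s <;> cases t
      · simp
      · exact hi
      · simpa [diagWedge, wedge_swap (b (i, false))] using hi
      · simp
    · exact Submodule.mem_sup_left (hoff _ _ hij)
  intro ξ hξ
  obtain ⟨w, hw, z, hz, rfl⟩ := Submodule.mem_sup.mp (hgen (Submodule.mem_top (x := ξ)))
  obtain ⟨c, rfl⟩ := Submodule.mem_span_singleton.mp hz
  have hw0 : δ w = 0 := hWδ hw
  have hc : c = 0 := by
    simpa [hw0, hi₀] using hξ
  simpa [hc] using hw

lemma IsSymplecticStable.ker_le (hW : IsSymplecticStable b W) {δ : ⋀[F]^2 V →ₗ[F] F}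
    (hWδ : W ≤ LinearMap.ker δ) (hδ : ∀ i, δ (diagWedge b i) ≠ 0) {ξ : ⋀[F]^2 V} (hξ : ξ ∈ W)
    (hne : ∀ c : F, ξ ≠ c • omega b) : LinearMap.ker δ ≤ W := by
  obtain ⟨a, c, hac, hmem⟩ := hW.exists_offDiag_wedge_mem hξ hne
  have hoff := fun (p q : Fin g × Bool) (hpq : p.1 ≠ q.1) => hW.offDiag_wedge_mem hac hmem hpq
  exact ker_le_of_offDiag_wedge_mem hWδ hoff (hW.diagWedge_sub_mem hoff) (hδ a.1)

end Field

/-- In characteristic `2` the sign of `Q (b (i, true)) (b (i, false))` is immaterial. -/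
def IsSymplecticBasis {g : ℕ} {F V : Type*} [Field F] [AddCommGroup V] [Module F V]
    (Q : V →ₗ[F] V →ₗ[F] F) (b : Module.Basis (Fin g × Bool) F V) : Prop :=
  ∀ p q, Q (b p) (b q) = if q = mate p then 1 else 0

def IsSpF2Invariant {g : ℕ} {F V : Type*} [Field F] [AddCommGroup V] [Module F V]
    (Q : V →ₗ[F] V →ₗ[F] F) (b : Module.Basis (Fin g × Bool) F V)
    (W : Submodule F (⋀[F]^2 V)) : Prop :=
  ∀ A : V ≃ₗ[F] V, IsSpF2 Q b A →
    ∀ A₂ : (⋀[F]^2 V) →ₗ[F] ⋀[F]^2 V,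
      (∀ w : Fin 2 → V, A₂ (expWedge F 2 w) = expWedge F 2 (fun t => A (w t))) →
      Submodule.map A₂ W ≤ W

section IsSymplecticBasis

variable {g : ℕ} {F V : Type*} [Field F] [AddCommGroup V] [Module F V]
  {Q : V →ₗ[F] V →ₗ[F] F} {b : Module.Basis (Fin g × Bool) F V}

lemma IsSymplecticBasis.flip_basis (hb : IsSymplecticBasis Q b) (r : Fin g × Bool) :
    Q.flip (b r) = b.coord (mate r) :=
  b.ext fun q => by
    simp only [LinearMap.flip_apply, hb q r, Module.Basis.coord_apply, Module.Basis.repr_self,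
      Finsupp.single_apply, eq_mate_comm]

lemma IsSymplecticBasis.isSpF2_basisEquiv (hb : IsSymplecticBasis Q b)
    (π : Equiv.Perm (Fin g × Bool)) (hπ : ∀ p, π (mate p) = mate (π p)) :
    IsSpF2 Q b (b.equiv b π) := by
  have hiso : Q.compl₁₂ (b.equiv b π : V →ₗ[F] V) (b.equiv b π : V →ₗ[F] V) = Q :=
    LinearMap.ext_basis b b fun p q => by
      simp only [LinearMap.compl₁₂_apply, LinearEquiv.coe_coe, Module.Basis.equiv_apply]
      rw [hb, hb, ← hπ]
      simp only [π.injective.eq_iff]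
  exact ⟨fun u v => LinearMap.congr_fun₂ hiso u v, fun p => ⟨{π p}, by simp⟩⟩

lemma IsSpF2Invariant.map_mem {W : Submodule F (⋀[F]^2 V)} (hW : IsSpF2Invariant Q b W)
    {A : V ≃ₗ[F] V} (hA : IsSpF2 Q b A) {ξ : ⋀[F]^2 V} (hξ : ξ ∈ W) :
    exteriorPower.map 2 (A : V →ₗ[F] V) ξ ∈ W :=
  hW A hA _ (fun w => exteriorPower.map_apply_ιMulti _ w) ⟨ξ, hξ, rfl⟩

end IsSymplecticBasis

section CharTwo

variable {g : ℕ} {F V : Type*} [Field F] [CharP F 2] [AddCommGroup V] [Module F V]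
  {Q : V →ₗ[F] V →ₗ[F] F} {b : Module.Basis (Fin g × Bool) F V}

lemma isSymplecticBasis_of_charTwo (hQ : Q.IsAlt)
    (hb1 : ∀ i j, Q (b (i, false)) (b (j, true)) = if i = j then 1 else 0)
    (hb2 : ∀ i j, Q (b (i, false)) (b (j, false)) = 0)
    (hb3 : ∀ i j, Q (b (i, true)) (b (j, true)) = 0) :
    IsSymplecticBasis Q b := by
  rintro ⟨i, s⟩ ⟨j, t⟩
  cases s <;> cases t
  · simp [mate, hb2]
  · simp [mate, hb1, eq_comm]
  · simp [mate, ← hQ.neg (b (j, false)), hb1, CharTwo.neg_eq]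
  · simp [mate, hb3]

lemma IsSymplecticBasis.isSpF2_transvection (hQ : Q.IsAlt) (hb : IsSymplecticBasis Q b)
    (S : Finset (Fin g × Bool)) :
    IsSpF2 Q b (LinearEquiv.transvection (f := Q.flip (∑ q ∈ S, b q)) (hQ _)) := by
  set v := ∑ q ∈ S, b q with hv
  refine ⟨isometry_transvection hQ v, fun p => ?_⟩
  have hpv : Q (b p) v = if mate p ∈ S then 1 else 0 := by
    simp [v, hb p, Finset.sum_ite_eq']
  change ∃ S', b p + Q.flip v (b p) • v = ∑ q ∈ S', b q
  rw [LinearMap.flip_apply, hpv]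
  by_cases hm : mate p ∈ S
  · rw [if_pos hm, one_smul]
    by_cases hp : p ∈ S
    · refine ⟨S.erase p, ?_⟩
      rw [hv, ← Finset.add_sum_erase S _ hp, ← add_assoc, ← two_smul F, CharTwo.two_eq_zero,
        zero_smul, zero_add]
    · exact ⟨insert p S, by rw [Finset.sum_insert hp]⟩
  · exact ⟨{p}, by rw [if_neg hm, zero_smul, add_zero, Finset.sum_singleton]⟩

lemma IsSpF2Invariant.isSymplecticStable {W : Submodule F (⋀[F]^2 V)} (hQ : Q.IsAlt)
    (hb : IsSymplecticBasis Q b) (hW : IsSpF2Invariant Q b W) : IsSymplecticStable b W where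
  map_transvection_mem S _ hξ := by
    have := hW.map_mem (hb.isSpF2_transvection hQ S) hξ
    simpa [map_sum, hb.flip_basis] using this
  map_perm_mem π hπ _ hξ := hW.map_mem (hb.isSpF2_basisEquiv π hπ) hξ

end CharTwo

theorem stmt8_general (F V : Type*) [Field F] [CharP F 2] [AddCommGroup V] [Module F V]
    (g : ℕ)
    (Q : V →ₗ[F] V →ₗ[F] F)
    (hAlt : ∀ v, Q v v = 0)
    (b : Module.Basis (Fin g × Bool) F V)
    (hb1 : ∀ i j, Q (b (i, false)) (b (j, true)) = if i = j then 1 else 0)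
    (hb2 : ∀ i j, Q (b (i, false)) (b (j, false)) = 0)
    (hb3 : ∀ i j, Q (b (i, true)) (b (j, true)) = 0)
    (δ₂ : (⋀[F]^2 V) →ₗ[F] F)
    (hδ₂ : ∀ u v : V, δ₂ (expWedge F 2 ![u, v]) = Q u v)
    (ω : ⋀[F]^2 V)
    (hω : ω = ∑ i : Fin g, expWedge F 2 ![b (i, false), b (i, true)]) :
    (Odd g →
      ∀ W : Submodule F (⋀[F]^2 V), W ≤ LinearMap.ker δ₂ →
        (∀ A : V ≃ₗ[F] V, IsSpF2 Q b A →
          ∀ A₂ : (⋀[F]^2 V) →ₗ[F] ⋀[F]^2 V,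
            (∀ w : Fin 2 → V, A₂ (expWedge F 2 w) = expWedge F 2 (fun t => A (w t))) →
            Submodule.map A₂ W ≤ W) →
        W = ⊥ ∨ W = LinearMap.ker δ₂) ∧
    (Even g →
      ω ∈ LinearMap.ker δ₂ ∧
      ∀ W : Submodule F (⋀[F]^2 V), (F ∙ ω) ≤ W → W ≤ LinearMap.ker δ₂ →
        (∀ A : V ≃ₗ[F] V, IsSpF2 Q b A →
          ∀ A₂ : (⋀[F]^2 V) →ₗ[F] ⋀[F]^2 V,
            (∀ w : Fin 2 → V, A₂ (expWedge F 2 w) = expWedge F 2 (fun t => A (w t))) →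
            Submodule.map A₂ W ≤ W) →
        W = (F ∙ ω) ∨ W = LinearMap.ker δ₂) := by
  have hb := isSymplecticBasis_of_charTwo hAlt hb1 hb2 hb3
  have hδ (i : Fin g) : δ₂ (diagWedge b i) = 1 := (hδ₂ _ _).trans (by simp [hb1])
  obtain rfl : ω = omega b := hω
  have hδω : δ₂ (omega b) = g := by simp [omega, hδ]
  have hker (W : Submodule F (⋀[F]^2 V)) (hWδ : W ≤ LinearMap.ker δ₂)
      (hW : IsSpF2Invariant Q b W) {ξ} (hξ : ξ ∈ W) (hne : ∀ c : F, ξ ≠ c • omega b) : W = LinearMap.ker δ₂ :=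
    le_antisymm hWδ <| (hW.isSymplecticStable hAlt hb).ker_le hWδ (by simp [hδ]) hξ hne
  refine ⟨fun hodd W hWδ hW => or_iff_not_imp_left.mpr fun hW0 => ?_, fun heven => ?_⟩
  · obtain ⟨ξ, hξ, hξ0⟩ := W.ne_bot_iff.mp hW0
    refine hker W hWδ hW hξ fun c hc => hξ0 ?_
    have hc0 : c = 0 := by
      simpa [hc, hδω, CharTwo.natCast_eq_ite, Nat.not_even_iff_odd.mpr hodd] using hWδ hξ
    rw [hc, hc0, zero_smul]
  · have hg : (g : F) = 0 := by simp [CharTwo.natCast_eq_ite, heven]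
    refine ⟨by simp [hδω, hg], fun W hωW hWδ hW => or_iff_not_imp_left.mpr fun hne => ?_⟩
    obtain ⟨ξ, hξ, hξω⟩ := SetLike.exists_of_lt (lt_of_le_of_ne hωW (Ne.symm hne))
    exact hker W hWδ hW hξ fun c hc =>
      hξω (hc ▸ Submodule.smul_mem _ c (Submodule.mem_span_singleton_self _))

/-- for `V` a `2g`-dimensional symplectic vector space over a field `F` of
characteristic `2`, `g ≥ 2`: if `g` is odd then `ker δ₂ ⊆ ⋀²V` has no nonzero proper
subspace invariant under `Sp_{2g}(𝔽₂)`; if `g` is even then `⟨ω⟩ ⊆ ker δ₂` and every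
`Sp_{2g}(𝔽₂)`-invariant subspace strictly between them is one of the two, i.e. the quotient
`ker δ₂ / ⟨ω⟩` is irreducible. -/
theorem stmt8 (F V : Type*) [Field F] [CharP F 2] [AddCommGroup V] [Module F V]
    (g : ℕ) (hg : 2 ≤ g)
    (Q : V →ₗ[F] V →ₗ[F] F)
    (hAlt : ∀ v, Q v v = 0)
    (b : Module.Basis (Fin g × Bool) F V)
    (hb1 : ∀ i j, Q (b (i, false)) (b (j, true)) = if i = j then 1 else 0)
    (hb2 : ∀ i j, Q (b (i, false)) (b (j, false)) = 0)
    (hb3 : ∀ i j, Q (b (i, true)) (b (j, true)) = 0)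
    (δ₂ : (⋀[F]^2 V) →ₗ[F] F)
    (hδ₂ : ∀ u v : V, δ₂ (expWedge F 2 ![u, v]) = Q u v)
    (ω : ⋀[F]^2 V)
    (hω : ω = ∑ i : Fin g, expWedge F 2 ![b (i, false), b (i, true)]) :
    (Odd g →
      ∀ W : Submodule F (⋀[F]^2 V), W ≤ LinearMap.ker δ₂ →
        (∀ A : V ≃ₗ[F] V, IsSpF2 Q b A →
          ∀ A₂ : (⋀[F]^2 V) →ₗ[F] ⋀[F]^2 V,
            (∀ w : Fin 2 → V, A₂ (expWedge F 2 w) = expWedge F 2 (fun t => A (w t))) →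
            Submodule.map A₂ W ≤ W) →
        W = ⊥ ∨ W = LinearMap.ker δ₂) ∧
    (Even g →
      ω ∈ LinearMap.ker δ₂ ∧
      ∀ W : Submodule F (⋀[F]^2 V), (F ∙ ω) ≤ W → W ≤ LinearMap.ker δ₂ →
        (∀ A : V ≃ₗ[F] V, IsSpF2 Q b A →
          ∀ A₂ : (⋀[F]^2 V) →ₗ[F] ⋀[F]^2 V,
            (∀ w : Fin 2 → V, A₂ (expWedge F 2 w) = expWedge F 2 (fun t => A (w t))) →
            Submodule.map A₂ W ≤ W) →
        W = (F ∙ ω) ∨ W = LinearMap.ker δ₂) :=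
  stmt8_general F V g Q hAlt b hb1 hb2 hb3 δ₂ hδ₂ ω hω
end

section
/- For g = 3 and V = 𝔽₂^6 with symplectic basis, the contraction δ₅ : ⋀⁵V → ⋀³V is injective, so Im(δ₅) ≅ ⋀⁵V ≅ V* as Sp₆(𝔽₂)-modules, and Im(δ₅) has dimension 6. -/
/-!
`⋀⁵V` has dimension `C(6,5) = 6`, so it suffices to find six vectors whose images under `δ₅`
are linearly independent. Take the basis wedges `ω_k` omitting `X_k`. In `ω_k` only the two
symplectic pairs `{X_{2c}, X_{2c+1}}` avoiding `k` contract, so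
`δ₅ ω_k = Σ_c X_{k'} ∧ X_{2c} ∧ X_{2c+1}` over these two pairs, where `k'` is the partner of `k`.
Each such 3-wedge occurs in the image of exactly one `ω_k`, hence the corresponding coordinate
minors of `⋀³V` form a family dual to the `δ₅ ω_k`. Then `Im δ₅ ≅ ⋀⁵V`, and both have the
dimension `6` of `V*`.
-/

open ExteriorAlgebra

open Function Module

theorem Fin.range_succAbove_comp_succAbove {n : ℕ} {i j : Fin (n + 2)} (hij : i < j) :
    Set.range (j.succAbove ∘ (i.castPred (Fin.ne_last_of_lt hij)).succAbove) = {i, j}ᶜ := by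
  set i' := i.castPred (Fin.ne_last_of_lt hij)
  have hi : j.succAbove i' = i :=
    (j.succAbove_of_castSucc_lt i' (by rwa [Fin.castSucc_castPred])).trans (i.castSucc_castPred _)
  ext x
  simp only [Set.mem_range, comp_apply, Set.mem_compl_iff, Set.mem_insert_iff,
    Set.mem_singleton_iff, not_or]
  constructor
  · rintro ⟨y, rfl⟩
    refine ⟨fun h => i'.succAbove_ne y ?_, j.succAbove_ne _⟩
    exact Fin.succAbove_right_injective (h.trans hi.symm)
  · rintro ⟨hxi, hxj⟩
    obtain ⟨z, rfl⟩ := Fin.exists_succAbove_eq_iff.mpr hxj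
    obtain ⟨y, rfl⟩ := Fin.exists_succAbove_eq_iff.mpr (fun h : z = i' => hxi (h ▸ hi))
    exact ⟨y, rfl⟩

theorem eq_succAbove_comp_succAbove_of_range {n : ℕ} {i j : Fin (n + 2)} (hij : i < j)
    {f : Fin n → Fin (n + 2)} (hf : StrictMono f) (hrange : Set.range f = {i, j}ᶜ) :
    f = j.succAbove ∘ (i.castPred (Fin.ne_last_of_lt hij)).succAbove :=
  (hf.range_inj (Fin.strictMono_succAbove j |>.comp (Fin.strictMono_succAbove _))).mp
    (hrange.trans (Fin.range_succAbove_comp_succAbove hij).symm)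

section
variable {R M ι : Type*} [CommRing R] [AddCommGroup M] [Module R M]

noncomputable def Module.Basis.minorDual {n : ℕ} (b : Basis ι R M) (t : Fin n → ι) :
    Dual R (⋀[R]^n M) :=
  exteriorPower.alternatingMapToDual R M n fun a => b.coord (t a)

theorem Module.Basis.minorDual_expWedge [DecidableEq ι] {n : ℕ} (b : Basis ι R M)
    (t s : Fin n → ι) :
    b.minorDual t (expWedge R n fun a => b (s a)) =
      (Matrix.of fun a c => if s a = t c then 1 else 0).det := by
  simp [Basis.minorDual, expWedge, ← exteriorPower.ιMulti_apply_coe, Finsupp.single_apply]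
end

theorem LinearMap.injective_of_linearIndependent_comp_of_card_eq_finrank {K M N ι : Type*}
    [Field K] [AddCommGroup M] [Module K M] [FiniteDimensional K M] [AddCommGroup N] [Module K N]
    [Fintype ι] (f : M →ₗ[K] N) {v : ι → M} (hv : LinearIndependent K (f ∘ v))
    (hcard : Fintype.card ι = finrank K M) : Injective f := by
  have hrange : finrank K M ≤ finrank K (range f) := by
    rw [← hcard, ← finrank_span_eq_card hv]
    exact Submodule.finrank_mono (Submodule.span_le.mpr (Set.range_comp_subset_range v f))
  have hker := f.finrank_range_add_finrank_ker
  rw [← LinearMap.ker_eq_bot, ← Submodule.finrank_eq_zero]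
  omega

theorem contraction_expWedge_eq_sum_succAbove {R V : Type*} [CommRing R] [AddCommGroup V]
    [Module R V] {n : ℕ}
    (Q : V →ₗ[R] V →ₗ[R] R) (e : Fin (n + 2) → Fin (n + 2) → Fin n → Fin (n + 2))
    (he : ∀ i j : Fin (n + 2), i < j →
      StrictMono (e i j) ∧ Set.range (e i j) = ({i, j} : Set (Fin (n + 2)))ᶜ)
    (δ : (⋀[R]^(n + 2) V) →ₗ[R] ⋀[R]^n V)
    (hδ : ∀ w : Fin (n + 2) → V, δ (expWedge R (n + 2) w) =
        ∑ i', ∑ j', if i' < j' then (Q (w i') (w j')) • expWedge R n (w ∘ e i' j') else 0)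
    (w : Fin (n + 2) → V) :
    δ (expWedge R (n + 2) w) = ∑ i, ∑ j, if h : i < j then Q (w i) (w j) •
      expWedge R n (w ∘ j.succAbove ∘ (i.castPred (Fin.ne_last_of_lt h)).succAbove) else 0 := by
  rw [hδ]
  refine Finset.sum_congr rfl fun i _ => Finset.sum_congr rfl fun j _ => ?_
  split_ifs with h
  · rw [eq_succAbove_comp_succAbove_of_range h (he i j h).1 (he i j h).2]
  · rfl

-- `separatingMinor k = {k', 2c, 2c + 1}`, with `k'` the partner of `k` and `c` the last pair
-- avoiding `k`: the one 3-wedge of `δ₅ ω_k` that occurs in no other `δ₅ ω_m`.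
def separatingMinor : Fin 6 → Fin 3 → Fin 6 :=
  ![![1, 4, 5], ![0, 4, 5], ![3, 4, 5], ![2, 4, 5], ![2, 3, 5], ![2, 3, 4]]

theorem minorDual_contraction_basisWedge {V : Type*} [AddCommGroup V] [Module (ZMod 2) V]
    (Q : V →ₗ[ZMod 2] V →ₗ[ZMod 2] ZMod 2) (X : Basis (Fin 6) (ZMod 2) V)
    (hX : ∀ i j : Fin 6, Q (X i) (X j) = if (i.val / 2 = j.val / 2 ∧ i ≠ j) then 1 else 0)
    (δ : (⋀[ZMod 2]^5 V) →ₗ[ZMod 2] ⋀[ZMod 2]^3 V)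
    (hδ : ∀ w : Fin 5 → V, δ (expWedge (ZMod 2) 5 w) = ∑ i, ∑ j, if h : i < j then
      Q (w i) (w j) • expWedge (ZMod 2) 3
        (w ∘ j.succAbove ∘ (i.castPred (Fin.ne_last_of_lt h)).succAbove) else 0)
    (m k : Fin 6) :
    X.minorDual (separatingMinor m) (δ (expWedge (ZMod 2) 5 fun a => X (k.succAbove a))) =
      if m = k then 1 else 0 := by
  rw [hδ]
  simp only [map_sum, apply_dite (X.minorDual _), map_smul, map_zero, comp_def, hX,
    X.minorDual_expWedge, Matrix.det_fin_three, Matrix.of_apply, separatingMinor]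
  revert m k
  decide

/-- for `g = 3` and `V = 𝔽₂⁶` with symplectic basis (blocks `{2r, 2r+1}`), the
contraction `δ₅ : ⋀⁵V → ⋀³V` is injective, so `Im δ₅ ≅ ⋀⁵V ≅ V*` and `Im δ₅` has
dimension `6`. -/
theorem stmt13 (V : Type*) [AddCommGroup V] [Module (ZMod 2) V]
    (Q : V →ₗ[ZMod 2] V →ₗ[ZMod 2] ZMod 2)
    (X : Module.Basis (Fin 6) (ZMod 2) V)
    (hX : ∀ i j : Fin 6,
      Q (X i) (X j) = if (i.val / 2 = j.val / 2 ∧ i ≠ j) then 1 else 0)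
    (e : Fin 5 → Fin 5 → Fin 3 → Fin 5)
    (he : ∀ i j : Fin 5, i < j →
      StrictMono (e i j) ∧ Set.range (e i j) = ({i, j} : Set (Fin 5))ᶜ)
    (δ₅ : (⋀[ZMod 2]^5 V) →ₗ[ZMod 2] ⋀[ZMod 2]^3 V)
    (hδ₅ : ∀ w : Fin 5 → V,
      δ₅ (expWedge (ZMod 2) 5 w) =
        ∑ i', ∑ j', if i' < j' then
          (Q (w i') (w j')) • expWedge (ZMod 2) 3 (w ∘ e i' j') else 0) :
    Function.Injective δ₅ ∧
    Module.finrank (ZMod 2) (LinearMap.range δ₅) = 6 ∧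
    Nonempty ((LinearMap.range δ₅) ≃ₗ[ZMod 2] ⋀[ZMod 2]^5 V) ∧
    Nonempty ((LinearMap.range δ₅) ≃ₗ[ZMod 2] Module.Dual (ZMod 2) V) := by
  have : Module.Finite (ZMod 2) V := .of_basis X
  have hV : finrank (ZMod 2) V = 6 := by simp [finrank_eq_card_basis X]
  have h5 : finrank (ZMod 2) (⋀[ZMod 2]^5 V) = 6 := by rw [exteriorPower.finrank_eq, hV]; rfl
  have hminor := minorDual_contraction_basisWedge Q X hX δ₅
    (contraction_expWedge_eq_sum_succAbove Q e he δ₅ hδ₅)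
  have hind : LinearIndependent (ZMod 2)
      (δ₅ ∘ fun k : Fin 6 => expWedge (ZMod 2) 5 fun a => X (k.succAbove a)) :=
    .of_pairwise_dual_eq_zero_one _ (fun m => X.minorDual (separatingMinor m))
      (fun m k h => by simpa [h] using hminor m k) (fun m => by simpa using hminor m m)
  have hinj := δ₅.injective_of_linearIndependent_comp_of_card_eq_finrank hind
    (by rw [h5, Fintype.card_fin])
  have hrange : finrank (ZMod 2) (LinearMap.range δ₅) = 6 :=
    (LinearMap.finrank_range_of_inj hinj).trans h5
  refine ⟨hinj, hrange, ⟨(LinearEquiv.ofInjective δ₅ hinj).symm⟩,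
    ⟨LinearEquiv.ofFinrankEq _ _ ?_⟩⟩
  rw [hrange, Subspace.dual_finrank_eq, hV]
end

section
/- Let F be a field of characteristic p > 0 and V an n-dimensional F-vector space. The contraction κ : V* ⊗ ⋀²V → V, f ⊗ (v∧w) ↦ f(v)w − f(w)v, is a surjective GL(V)-equivariant linear map (for n ≥ 2), and the map τ : V → V* ⊗ ⋀²V defined on a basis by τ(e_k) = Σ_{i=1}^n e_i* ⊗ (e_k ∧ e_i) is GL(V)-equivariant and satisfies κ(τ(v)) = −(n−1)·v for all v ∈ V. In particular Im(τ) ⊆ ker(κ) if and only if n ≡ 1 (mod p). -/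
/-!
Under the isomorphism `V* ⊗ W ≅ Hom(V, W)`, `τ v` corresponds to the map `u ↦ v ∧ u`. This
description does not mention the basis, so `τ` is `GL(V)`-equivariant, and `κ` is equivariant
because its defining formula is. Contracting `τ v = ∑ᵢ eᵢ* ⊗ (v ∧ eᵢ)` gives
`∑ᵢ eᵢ*(v) eᵢ - ∑ᵢ eᵢ*(eᵢ) v = v - n v`, so `κ ∘ τ = -(n - 1) • id`, which vanishes exactly
when `n = 1` in `F`, i.e. when `n ≡ 1 [MOD p]`.
-/

open TensorProduct ExteriorAlgebra

lemma Matrix.update_vecCons_two_zero {α : Type*} (v w x : α) :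
    Function.update ![v, w] 0 x = ![x, w] := by
  ext i; fin_cases i <;> rfl

lemma Matrix.update_vecCons_two_one {α : Type*} (v w x : α) :
    Function.update ![v, w] 1 x = ![v, x] := by
  ext i; fin_cases i <;> rfl

lemma Matrix.vecCons_two_eta {α : Type*} (w : Fin 2 → α) : ![w 0, w 1] = w := by
  ext i; fin_cases i <;> rfl

section Wedge

variable {R M N : Type*} [CommRing R] [AddCommGroup M] [Module R M]
  [AddCommGroup N] [Module R N]

lemma expWedge_eq_ιMulti (n : ℕ) (w : Fin n → M) :
    expWedge R n w = exteriorPower.ιMulti R n w := rfl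

variable (R M) in
noncomputable def wedgeTwo : M →ₗ[R] M →ₗ[R] ⋀[R]^2 M :=
  LinearMap.mk₂ R (fun v w => exteriorPower.ιMulti R 2 ![v, w])
    (fun v v' w => by
      simpa only [Matrix.update_vecCons_two_zero] using
        (exteriorPower.ιMulti R 2).map_update_add ![v, w] 0 v v')
    (fun c v w => by
      simpa only [Matrix.update_vecCons_two_zero] using
        (exteriorPower.ιMulti R 2).map_update_smul ![v, w] 0 c v)
    (fun v w w' => by
      simpa only [Matrix.update_vecCons_two_one] using
        (exteriorPower.ιMulti R 2).map_update_add ![v, w] 1 w w')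
    (fun c v w => by
      simpa only [Matrix.update_vecCons_two_one] using
        (exteriorPower.ιMulti R 2).map_update_smul ![v, w] 1 c w)

lemma wedgeTwo_apply (v w : M) : wedgeTwo R M v w = expWedge R 2 ![v, w] := rfl

lemma exteriorPower_two_ext {φ ψ : ⋀[R]^2 M →ₗ[R] N}
    (h : ∀ v w, φ (expWedge R 2 ![v, w]) = ψ (expWedge R 2 ![v, w])) : φ = ψ := by
  refine exteriorPower.linearMap_ext (AlternatingMap.ext fun w => ?_)
  simpa only [Matrix.vecCons_two_eta, LinearMap.compAlternatingMap_apply, ← expWedge_eq_ιMulti]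
    using h (w 0) (w 1)

lemma tensor_exteriorPower_two_ext {P : Type*} [AddCommGroup P] [Module R P]
    {φ ψ : P ⊗[R] ⋀[R]^2 M →ₗ[R] N}
    (h : ∀ f v w, φ (f ⊗ₜ expWedge R 2 ![v, w]) = ψ (f ⊗ₜ expWedge R 2 ![v, w])) : φ = ψ :=
  TensorProduct.ext' fun f =>
    LinearMap.congr_fun (exteriorPower_two_ext (φ := φ ∘ₗ TensorProduct.mk R P _ f)
      (ψ := ψ ∘ₗ TensorProduct.mk R P _ f) (h f))

lemma apply_expWedge_pair {A : ⋀[R]^2 M →ₗ[R] ⋀[R]^2 M} {g : M ≃ₗ[R] M}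
    (hA : ∀ w : Fin 2 → M, A (expWedge R 2 w) = expWedge R 2 (fun t => g (w t))) (v w : M) :
    A (expWedge R 2 ![v, w]) = expWedge R 2 ![g v, g w] := by
  rw [hA]; congr 1; ext i; fin_cases i <;> rfl

end Wedge

section DualTensor

variable {R M M' N N' : Type*} [CommRing R] [AddCommGroup M] [Module R M] [AddCommGroup M']
  [Module R M'] [AddCommGroup N] [Module R N] [AddCommGroup N'] [Module R N']

lemma dualTensorHom_map_dualMap (α : M' →ₗ[R] M) (A : N →ₗ[R] N')
    (x : Module.Dual R M ⊗[R] N) :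
    dualTensorHom R M' N' (TensorProduct.map α.dualMap A x) =
      A ∘ₗ dualTensorHom R M N x ∘ₗ α := by
  induction x using TensorProduct.induction_on with
  | zero => simp
  | tmul f n => ext; simp [dualTensorHom_apply]
  | add x y hx hy => simp only [map_add, hx, hy, LinearMap.add_comp, LinearMap.comp_add]

variable {ι : Type*} [Fintype ι] [DecidableEq ι]

lemma dualTensorHomEquivOfBasis_symm_apply (b : Module.Basis ι R M) (φ : M →ₗ[R] N) :
    (dualTensorHomEquivOfBasis b).symm φ = ∑ i, b.coord i ⊗ₜ φ (b i) := by
  simp [dualTensorHomEquivOfBasis]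

end DualTensor

section Contraction

variable {R M : Type*} [CommRing R] [AddCommGroup M] [Module R M]

variable (R M) in
def IsWedgeContraction (κ : Module.Dual R M ⊗[R] ⋀[R]^2 M →ₗ[R] M) : Prop :=
  ∀ f v w, κ (f ⊗ₜ expWedge R 2 ![v, w]) = f v • w - f w • v

variable {κ : Module.Dual R M ⊗[R] ⋀[R]^2 M →ₗ[R] M} {ι : Type*}

lemma IsWedgeContraction.surjective (hκ : IsWedgeContraction R M κ)
    (b : Module.Basis ι R M) {i j : ι} (hij : i ≠ j) : Function.Surjective κ := by
  intro v
  refine ⟨b.coord i ⊗ₜ expWedge R 2 ![b i, v] +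
    b.coord i v • b.coord j ⊗ₜ expWedge R 2 ![b j, b i], ?_⟩
  simp [hκ _ _ _, hij]

lemma IsWedgeContraction.comp_map_dualMap (hκ : IsWedgeContraction R M κ)
    (g : M ≃ₗ[R] M) {A : ⋀[R]^2 M →ₗ[R] ⋀[R]^2 M}
    (hA : ∀ w : Fin 2 → M, A (expWedge R 2 w) = expWedge R 2 (fun t => g (w t))) :
    κ ∘ₗ TensorProduct.map g.symm.toLinearMap.dualMap A = g.toLinearMap ∘ₗ κ :=
  tensor_exteriorPower_two_ext fun f v w => by
    simp [hκ _ _ _, apply_expWedge_pair hA]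

lemma IsWedgeContraction.apply_sum_coord_tmul_wedgeTwo [Fintype ι] [DecidableEq ι]
    (hκ : IsWedgeContraction R M κ) (b : Module.Basis ι R M) (v : M) :
    κ (∑ i, b.coord i ⊗ₜ wedgeTwo R M v (b i)) = -((Fintype.card ι : R) - 1) • v := by
  simp [wedgeTwo_apply, hκ _ _ _, Finset.sum_sub_distrib, sub_smul, Nat.cast_smul_eq_nsmul]

end Contraction

section Coevaluation

variable {R M : Type*} [CommRing R] [AddCommGroup M] [Module R M]
  {ι : Type*} [Fintype ι] [DecidableEq ι]

lemma eq_dualTensorHomEquivOfBasis_symm_comp_wedgeTwo (b : Module.Basis ι R M)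
    {τ : M →ₗ[R] Module.Dual R M ⊗[R] ⋀[R]^2 M}
    (hτ : ∀ k, τ (b k) = ∑ i, b.coord i ⊗ₜ[R] expWedge R 2 ![b k, b i]) :
    τ = (dualTensorHomEquivOfBasis b).symm.toLinearMap ∘ₗ wedgeTwo R M :=
  b.ext fun k => by simp [hτ, dualTensorHomEquivOfBasis_symm_apply, wedgeTwo_apply]

lemma map_dualMap_dualTensorHomEquivOfBasis_symm_wedgeTwo (b : Module.Basis ι R M)
    (g : M ≃ₗ[R] M) {A : ⋀[R]^2 M →ₗ[R] ⋀[R]^2 M}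
    (hA : ∀ w : Fin 2 → M, A (expWedge R 2 w) = expWedge R 2 (fun t => g (w t))) (v : M) :
    TensorProduct.map g.symm.toLinearMap.dualMap A
        ((dualTensorHomEquivOfBasis b).symm (wedgeTwo R M v)) =
      (dualTensorHomEquivOfBasis b).symm (wedgeTwo R M (g v)) := by
  apply (dualTensorHomEquivOfBasis b).injective
  rw [LinearEquiv.apply_symm_apply, dualTensorHomEquivOfBasis_apply, dualTensorHom_map_dualMap,
    dualTensorHomEquivOfBasis_symm_cancel_right]
  ext u
  simp [wedgeTwo_apply, apply_expWedge_pair hA]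

end Coevaluation

lemma LinearMap.range_le_ker_iff_of_apply_eq_smul {K V W : Type*} [Field K] [AddCommGroup V]
    [Module K V] [Nontrivial V] [AddCommMonoid W] [Module K W] {τ : V →ₗ[K] W} {κ : W →ₗ[K] V}
    {c : K} (h : ∀ v, κ (τ v) = c • v) : LinearMap.range τ ≤ LinearMap.ker κ ↔ c = 0 := by
  obtain ⟨v, hv⟩ := exists_ne (0 : V)
  rw [LinearMap.range_le_ker_iff]
  refine ⟨fun h0 => ?_, fun hc => LinearMap.ext fun v => by simp [h, hc]⟩
  have := LinearMap.congr_fun h0 v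
  simp only [LinearMap.comp_apply, h, LinearMap.zero_apply, smul_eq_zero] at this
  exact this.resolve_right hv

theorem stmt16_general (F V : Type*) [Field F] (p : ℕ) [CharP F p]
    [AddCommGroup V] [Module F V]
    (n : ℕ) (hn : 2 ≤ n)
    (e : Module.Basis (Fin n) F V)
    (κ : (Module.Dual F V ⊗[F] ⋀[F]^2 V) →ₗ[F] V)
    (hκ : ∀ (f : Module.Dual F V) (v w : V),
      κ (f ⊗ₜ expWedge F 2 ![v, w]) = f v • w - f w • v)
    (τ : V →ₗ[F] (Module.Dual F V ⊗[F] ⋀[F]^2 V))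
    (hτ : ∀ k : Fin n, τ (e k) = ∑ i, e.coord i ⊗ₜ[F] expWedge F 2 ![e k, e i]) :
    Function.Surjective κ ∧
    (∀ g : V ≃ₗ[F] V,
      ∀ A₂ : (⋀[F]^2 V) →ₗ[F] ⋀[F]^2 V,
        (∀ w : Fin 2 → V, A₂ (expWedge F 2 w) = expWedge F 2 (fun t => g (w t))) →
        (∀ x : Module.Dual F V ⊗[F] ⋀[F]^2 V,
          κ (TensorProduct.map (g.symm.toLinearMap.dualMap) A₂ x) = g (κ x)) ∧
        (∀ v : V,
          τ (g v) = TensorProduct.map (g.symm.toLinearMap.dualMap) A₂ (τ v))) ∧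
    (∀ v : V, κ (τ v) = (-((n : F) - 1)) • v) ∧
    (LinearMap.range τ ≤ LinearMap.ker κ ↔ n ≡ 1 [MOD p]) := by
  have hκ : IsWedgeContraction F V κ := hκ
  have hτe := eq_dualTensorHomEquivOfBasis_symm_comp_wedgeTwo e hτ
  have hκτ (v : V) : κ (τ v) = (-((n : F) - 1)) • v := by
    simpa [hτe, dualTensorHomEquivOfBasis_symm_apply] using
      hκ.apply_sum_coord_tmul_wedgeTwo e v
  have : Nontrivial V := nontrivial_of_ne _ _ (e.ne_zero ⟨0, by omega⟩)
  refine ⟨hκ.surjective e (i := ⟨0, by omega⟩) (j := ⟨1, by omega⟩) (by simp [Fin.ext_iff]),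
    fun g A₂ hA => ⟨fun x => ?_, fun v => ?_⟩, hκτ, ?_⟩
  · exact LinearMap.congr_fun (hκ.comp_map_dualMap g hA) x
  · simpa [hτe] using (map_dualMap_dualTensorHomEquivOfBasis_symm_wedgeTwo e g hA v).symm
  · rw [LinearMap.range_le_ker_iff_of_apply_eq_smul hκτ, neg_eq_zero, sub_eq_zero,
      ← Nat.cast_one, CharP.natCast_eq_natCast F p]

/-- over a field `F` of characteristic `p > 0` and `V` of dimension `n ≥ 2`,
the contraction `κ : V* ⊗ ⋀²V → V`, `f ⊗ (v∧w) ↦ f(v)w − f(w)v`, is surjective and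
`GL(V)`-equivariant; the map `τ : V → V* ⊗ ⋀²V`, `e_k ↦ Σᵢ eᵢ* ⊗ (e_k ∧ eᵢ)`, is
`GL(V)`-equivariant and satisfies `κ (τ v) = −(n−1)·v`; in particular
`Im τ ⊆ ker κ ↔ n ≡ 1 (mod p)`. -/
theorem stmt16 (F V : Type*) [Field F] (p : ℕ) (hp : p ≠ 0) [CharP F p]
    [AddCommGroup V] [Module F V] [FiniteDimensional F V]
    (n : ℕ) (hn : 2 ≤ n) (hdim : Module.finrank F V = n)
    (e : Module.Basis (Fin n) F V)
    (κ : (Module.Dual F V ⊗[F] ⋀[F]^2 V) →ₗ[F] V)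
    (hκ : ∀ (f : Module.Dual F V) (v w : V),
      κ (f ⊗ₜ expWedge F 2 ![v, w]) = f v • w - f w • v)
    (τ : V →ₗ[F] (Module.Dual F V ⊗[F] ⋀[F]^2 V))
    (hτ : ∀ k : Fin n, τ (e k) = ∑ i, e.coord i ⊗ₜ[F] expWedge F 2 ![e k, e i]) :
    Function.Surjective κ ∧
    (∀ g : V ≃ₗ[F] V,
      ∀ A₂ : (⋀[F]^2 V) →ₗ[F] ⋀[F]^2 V,
        (∀ w : Fin 2 → V, A₂ (expWedge F 2 w) = expWedge F 2 (fun t => g (w t))) →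
        (∀ x : Module.Dual F V ⊗[F] ⋀[F]^2 V,
          κ (TensorProduct.map (g.symm.toLinearMap.dualMap) A₂ x) = g (κ x)) ∧
        (∀ v : V,
          τ (g v) = TensorProduct.map (g.symm.toLinearMap.dualMap) A₂ (τ v))) ∧
    (∀ v : V, κ (τ v) = (-((n : F) - 1)) • v) ∧
    (LinearMap.range τ ≤ LinearMap.ker κ ↔ n ≡ 1 [MOD p]) :=
  stmt16_general F V p n hn e κ hκ τ hτ
end
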